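/- arXiv:1404.2370 — 11 statements merged into one kernel-verified Lean document; each statement's English description precedes it below -/
import Mathlib

section
/- Let ♭ be an interior operator on a preorder P. Then the assignment J sending each V ∈ P to the set J(V) of all sieves on V that contain the morphism ♭V ⟶ V is a Grothendieck topology on P: (i) the maximal sieve on V belongs to J(V); (ii) if S ∈ J(V) and V' ≤ V, then the pullback of S along the morphism V' ⟶ V belongs to J(V'); (iii) if S ∈ J(V) and R is a sieve on V such that for every morphism f in S the pullback of R along f is covering, then R ∈ J(V). -/
open CategoryTheory

universe u

theorem CategoryTheory.Sieve.arrows_of_le {P : Type u} [Preorder P] {U V W : P} (S : Sieve V)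
    (hUV : U ≤ V) (hS : S.arrows (homOfLE hUV)) (hWU : W ≤ U) (f : W ⟶ V) : S.arrows f := by
  have hf : homOfLE hWU ≫ homOfLE hUV = f := Subsingleton.elim _ _
  exact hf ▸ S.downward_closed hS (homOfLE hWU)

/-- For an interior operator `b` on a preorder `P`, the assignment
`J V := { S : Sieve V | (homOfLE (hdefl V) : b V ⟶ V) ∈ S }` is a Grothendieck topology:
(i) the maximal sieve is covering, (ii) covering sieves are stable under pullback,
(iii) local character (transitivity). -/
theorem quantization_induces_grothendieck_topology
    {P : Type u} [Preorder P] (b : P → P)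
    (hmono : ∀ ⦃V' V : P⦄, V' ≤ V → b V' ≤ b V)
    (hdefl : ∀ V : P, b V ≤ V)
    (hidem : ∀ V : P, b (b V) = b V) :
    (∀ V : P, (⊤ : Sieve V).arrows (homOfLE (hdefl V))) ∧
    (∀ (V V' : P) (h : V' ≤ V) (S : Sieve V),
      S.arrows (homOfLE (hdefl V)) →
      (S.pullback (homOfLE h)).arrows (homOfLE (hdefl V'))) ∧
    (∀ (V : P) (S R : Sieve V),
      S.arrows (homOfLE (hdefl V)) →
      (∀ (W : P) (f : W ⟶ V), S.arrows f → (R.pullback f).arrows (homOfLE (hdefl W))) →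
      R.arrows (homOfLE (hdefl V))) := by
  refine ⟨fun V => trivial, fun V V' h S hS => ?_, fun V S R hS hR => ?_⟩
  · exact S.arrows_of_le (hdefl V) hS (hmono h) _
  · -- Pulling `R` back along `♭V ⟶ V` puts `♭♭V ⟶ V` in `R`, and `♭♭V = ♭V`.
    have hbb : R.arrows (homOfLE (hdefl (b V)) ≫ homOfLE (hdefl V)) := hR _ _ hS
    exact R.arrows_of_le _ hbb (hidem V).ge _
end

section
/- Let ♭ be an interior operator on a preorder P, J the quantization-induced Grothendieck topology, Q : P^op → Type a presheaf, and S a subpresheaf of Q. Then the J-closure (sheafification) of S is given objectwise by: for every V ∈ P, (closure of S)(V) = { q ∈ Q(V) | the restriction of q along ♭V ≤ V lies in S(♭V) }. -/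
open CategoryTheory Opposite

universe u v

/-- The quantization-induced Grothendieck topology on a preorder `P` carrying an interior
operator `b`: a sieve on `V` is covering iff it contains the morphism `b V ⟶ V`. -/
def qTop {P : Type u} [Preorder P] (b : P → P)
    (hmono : ∀ ⦃V' V : P⦄, V' ≤ V → b V' ≤ b V)
    (hdefl : ∀ V : P, b V ≤ V)
    (hidem : ∀ V : P, b (b V) = b V) : GrothendieckTopology P where
  sieves V := {S : Sieve V | S.arrows (homOfLE (hdefl V))}
  top_mem' V := trivial
  pullback_stable' := by
    intro V V' S f hS
    have h1 : b V' ≤ b V := hmono (leOfHom f)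
    have h2 : S.arrows (homOfLE h1 ≫ homOfLE (hdefl V)) := S.downward_closed hS (homOfLE h1)
    show S.arrows (homOfLE (hdefl V') ≫ f)
    exact (Subsingleton.elim _ _ : homOfLE h1 ≫ homOfLE (hdefl V) = homOfLE (hdefl V') ≫ f) ▸ h2
  transitive' := by
    intro V S hS R hR
    have h2 := hR hS
    simp only [Set.mem_setOf_eq, Sieve.pullback_apply] at h2 ⊢
    have key : ∀ (W : P), W = b V → ∀ (f : W ⟶ V), R.arrows f → R.arrows (homOfLE (hdefl V)) := by
      rintro W rfl f hf
      exact (Subsingleton.elim f (homOfLE (hdefl V))) ▸ hf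
    exact key (b (b V)) (hidem V) _ h2

/-- the `J`-closure of a subpresheaf `S` of `Q` is given objectwise by the
sections of `Q` whose restriction along `b V ≤ V` lies in `S (b V)`. -/
theorem closure_of_subpresheaf_eq
    {P : Type u} [Preorder P] (b : P → P)
    (hmono : ∀ ⦃V' V : P⦄, V' ≤ V → b V' ≤ b V)
    (hdefl : ∀ V : P, b V ≤ V)
    (hidem : ∀ V : P, b (b V) = b V)
    (Q : Pᵒᵖ ⥤ Type v) (S : Subfunctor Q) (V : P) :
    (S.sheafify (qTop b hmono hdefl hidem)).obj (op V) =
      {q : Q.obj (op V) | Q.map (homOfLE (hdefl V)).op q ∈ S.obj (op (b V))} :=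
  -- `q` is in the closure iff its sieve `S.sieveOfSection q` is covering, i.e. contains
  -- `b V ⟶ V`, which says exactly that the restriction of `q` to `b V` lies in `S`.
  rfl
end

section
/- Let ♭ be an interior operator on a preorder P, J the quantization-induced Grothendieck topology, and Q : P^op → Type a presheaf. Then the presheaf ♭*Q, defined by (♭*Q)(V) := Q(♭V) with restriction along V' ≤ V given by the restriction of Q along ♭V' ≤ ♭V, satisfies the sheaf condition for J (every matching family for a J-covering sieve has a unique amalgamation). -/
open CategoryTheory Opposite

universe u v

/-- The presheaf `♭*Q`, with `(♭*Q)(V) := Q(♭V)` and restriction along `V' ≤ V` given by the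
restriction of `Q` along `♭V' ≤ ♭V`. -/
def flatStar {P : Type u} [Preorder P] (b : P → P)
    (hmono : ∀ ⦃V' V : P⦄, V' ≤ V → b V' ≤ b V)
    (Q : Pᵒᵖ ⥤ Type v) : Pᵒᵖ ⥤ Type v where
  obj V := Q.obj (op (b V.unop))
  map {_ _} f := Q.map (homOfLE (hmono (leOfHom f.unop))).op
  map_id V := Q.map_id (op (b V.unop))
  map_comp {_ _ _} _ _ := Q.map_comp _ _

/- A covering sieve on `V` contains `♭V ⟶ V`, and `♭*Q` sends this arrow to a bijection
`Q(♭V) → Q(♭♭V)` because `♭♭V = ♭V`. So `♭*Q` is a sheaf for the one-arrow presieve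
`{♭V ⟶ V}`, which every covering sieve contains; and any `W ⟶ V` in the sieve is refined by
`♭W ⟶ W`, which factors through `♭V ⟶ V` and on which `♭*Q` is again injective. -/

theorem CategoryTheory.Presieve.isSheafFor_singleton_of_bijective {C : Type*} [Category C]
    {P : Cᵒᵖ ⥤ Type*} {X Y : C} {f : X ⟶ Y} (hf : Function.Bijective (P.map f.op)) :
    Presieve.IsSheafFor P (.singleton f) :=
  Presieve.isSheafFor_singleton.2 fun x _ => hf.existsUnique x

theorem bijective_map_homOfLE_op_of_ge {P : Type u} [Preorder P] (Q : Pᵒᵖ ⥤ Type v) {a a' : P}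
    (h : a ≤ a') (h' : a' ≤ a) : Function.Bijective (Q.map (homOfLE h).op) := by
  have : IsIso (homOfLE h) := ⟨homOfLE h', Subsingleton.elim _ _, Subsingleton.elim _ _⟩
  exact (isIso_iff_bijective _).1 inferInstance

theorem flatStar_map_homOfLE_bijective {P : Type u} [Preorder P] (b : P → P)
    (hmono : ∀ ⦃V' V : P⦄, V' ≤ V → b V' ≤ b V) (hdefl : ∀ V : P, b V ≤ V)
    (hidem : ∀ V : P, b (b V) = b V) (Q : Pᵒᵖ ⥤ Type v) (V : P) :
    Function.Bijective ((flatStar b hmono Q).map (homOfLE (hdefl V)).op) :=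
  bijective_map_homOfLE_op_of_ge Q _ (hidem V).ge

/-- the presheaf `♭*Q` satisfies the sheaf condition for the
quantization-induced Grothendieck topology. -/
theorem flatStar_isSheaf
    {P : Type u} [Preorder P] (b : P → P)
    (hmono : ∀ ⦃V' V : P⦄, V' ≤ V → b V' ≤ b V)
    (hdefl : ∀ V : P, b V ≤ V)
    (hidem : ∀ V : P, b (b V) = b V)
    (Q : Pᵒᵖ ⥤ Type v) :
    Presieve.IsSheaf (qTop b hmono hdefl hidem) (flatStar b hmono Q) := by
  have bij := flatStar_map_homOfLE_bijective b hmono hdefl hidem Q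
  intro V S hS
  refine Presieve.isSheafFor_of_factorsThru _ (S := .singleton (homOfLE (hdefl V)))
    (Presieve.factorsThru_of_le _ _ ?_) (Presieve.isSheafFor_singleton_of_bijective (bij V)) ?_
  · rintro _ _ ⟨⟩
    exact hS
  · intro W g _
    refine ⟨.singleton (homOfLE (hdefl W)),
      Presieve.isSeparatedFor_singleton.2 (bij W).injective, ?_⟩
    rintro _ _ ⟨⟩
    exact ⟨_, homOfLE (hmono (leOfHom g)), _, .mk, rfl⟩
end

section
/- Let ♭ be an interior operator on a preorder P and J the quantization-induced Grothendieck topology. A presheaf Q : P^op → Type satisfies the sheaf condition for J if and only if for every V ∈ P the restriction map Q(V) → Q(♭V) along the morphism ♭V ≤ V is a bijection. -/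
/-! The topology `qTop` is generated by the coverage whose only covering family on `V` is the
single arrow `♭V ⟶ V`, so a sheaf for it is exactly a presheaf that is a sheaf for each of these
singletons. In a thin category any two arrows into `♭V` agree, so every element of `Q(♭V)` is
a compatible family, and being a sheaf for `{♭V ⟶ V}` says precisely that `Q(V) → Q(♭V)` is
bijective. -/

open CategoryTheory Opposite

universe u v

namespace CategoryTheory

lemma Presieve.isSheafFor_singleton_iff_bijective {C : Type*} [Category* C] [Quiver.IsThin C]
    (F : Cᵒᵖ ⥤ Type*) {X Y : C} (f : X ⟶ Y) :
    IsSheafFor F (singleton f) ↔ Function.Bijective (F.map f.op) := by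
  simp only [isSheafFor_singleton, Function.bijective_iff_existsUnique]
  exact forall_congr' fun x ↦
    ⟨fun h ↦ h fun p₁ p₂ _ ↦ by rw [Subsingleton.elim p₁ p₂], fun h _ ↦ h⟩

variable {P : Type u} [Preorder P] (b : P → P)

def interiorCoverage (hmono : ∀ ⦃V' V : P⦄, V' ≤ V → b V' ≤ b V) (hdefl : ∀ V : P, b V ≤ V) :
    Coverage P where
  coverings V := {Presieve.singleton (homOfLE (hdefl V))}
  pullback V V' f _ hS := by
    subst hS
    refine ⟨_, rfl, ?_⟩
    rintro _ _ ⟨⟩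
    exact ⟨_, homOfLE (hmono (leOfHom f)), _, ⟨⟩, Subsingleton.elim _ _⟩

theorem qTop_eq_toGrothendieck_interiorCoverage (hmono : ∀ ⦃V' V : P⦄, V' ≤ V → b V' ≤ b V)
    (hdefl : ∀ V : P, b V ≤ V) (hidem : ∀ V : P, b (b V) = b V) :
    qTop b hmono hdefl hidem = (interiorCoverage b hmono hdefl).toGrothendieck := by
  refine le_antisymm (fun V S hS ↦ ?_) ((Coverage.gi P).gc.l_le ?_)
  · exact Coverage.mem_toGrothendieck_sieves_of_superset _
      (by rintro _ _ ⟨⟩; exact hS) rfl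
  · rintro V _ rfl
    exact Sieve.le_generate _ _ _ (Presieve.singleton_self _)

end CategoryTheory

/-- a presheaf `Q` on `P` is a sheaf for the quantization-induced topology iff
all the restriction maps `Q(V) → Q(♭V)` are bijections. -/
theorem isSheaf_iff_restriction_bijective
    {P : Type u} [Preorder P] (b : P → P)
    (hmono : ∀ ⦃V' V : P⦄, V' ≤ V → b V' ≤ b V)
    (hdefl : ∀ V : P, b V ≤ V)
    (hidem : ∀ V : P, b (b V) = b V)
    (Q : Pᵒᵖ ⥤ Type v) :
    Presieve.IsSheaf (qTop b hmono hdefl hidem) Q ↔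
      ∀ V : P, Function.Bijective (Q.map (homOfLE (hdefl V)).op) := by
  rw [qTop_eq_toGrothendieck_interiorCoverage, Presieve.isSheaf_coverage]
  simp only [← Presieve.isSheafFor_singleton_iff_bijective]
  exact ⟨fun h V ↦ h _ rfl, by rintro h V _ rfl; exact h V⟩
end

section
/- Let ♭ be an interior operator on a preorder P and J the quantization-induced Grothendieck topology. For every presheaf Q : P^op → Type, the natural transformation ζ_Q : Q ⟶ ♭*Q (whose component at V is the restriction map Q(V) → Q(♭V) along ♭V ≤ V) exhibits ♭*Q as the J-sheafification of Q: for every presheaf R satisfying the sheaf condition for J and every natural transformation f : Q ⟶ R, there exists a unique natural transformation g : ♭*Q ⟶ R with g ∘ ζ_Q = f. -/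
open CategoryTheory Opposite

universe u v

/-- The canonical natural transformation `ζ_Q : Q ⟶ ♭*Q`, whose component at `V` is the
restriction map `Q(V) → Q(♭V)` along `♭V ≤ V`. -/
def zeta {P : Type u} [Preorder P] (b : P → P)
    (hmono : ∀ ⦃V' V : P⦄, V' ≤ V → b V' ≤ b V)
    (hdefl : ∀ V : P, b V ≤ V)
    (Q : Pᵒᵖ ⥤ Type v) : Q ⟶ flatStar b hmono Q where
  app V := Q.map (homOfLE (hdefl V.unop)).op
  naturality {V W} f := by
    dsimp [flatStar]
    rw [← Q.map_comp, ← Q.map_comp]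
    rfl

/-! For a `J`-sheaf `R` the sieve generated by `♭V ⟶ V` covers `V`, and in a thin category every
family on a single arrow is compatible, so the sheaf condition says exactly that `R(V) → R(♭V)` is
bijective, i.e. that `ζ_R` is an isomorphism. The factorisation of `f : Q ⟶ R` is then
`♭*f ≫ ζ_R⁻¹`. It is unique because `♭*ζ_Q = ζ_{♭*Q}` (both restrict along the unique arrow
`♭♭V ⟶ ♭V`), so naturality of `ζ` gives `g ≫ ζ_R = ♭*(ζ_Q ≫ g)` for every `g : ♭*Q ⟶ R`. -/

namespace CategoryTheory.Presieve

lemma isSheafFor_singleton_iff_bijective_s5 {C : Type*} [Category C]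
    [∀ X Y : C, Subsingleton (X ⟶ Y)] (F : Cᵒᵖ ⥤ Type*) {X Y : C} (f : X ⟶ Y) :
    IsSheafFor F (.singleton f) ↔ Function.Bijective (F.map f.op) := by
  rw [isSheafFor_singleton, Function.bijective_iff_existsUnique]
  exact forall_congr' fun x ↦
    ⟨fun h ↦ h fun p₁ p₂ _ ↦ by rw [Subsingleton.elim p₁ p₂], fun h _ ↦ h⟩

end CategoryTheory.Presieve

section FlatStar

variable {P : Type u} [Preorder P] (b : P → P)
  (hmono : ∀ ⦃V' V : P⦄, V' ≤ V → b V' ≤ b V) (hdefl : ∀ V : P, b V ≤ V)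
  (hidem : ∀ V : P, b (b V) = b V)

lemma bijective_map_of_isSheaf_qTop {R : Pᵒᵖ ⥤ Type v}
    (hR : Presieve.IsSheaf (qTop b hmono hdefl hidem) R) (V : P) :
    Function.Bijective (R.map (homOfLE (hdefl V)).op) := by
  have hcov : Sieve.generate (.singleton (homOfLE (hdefl V))) ∈ qTop b hmono hdefl hidem V :=
    Sieve.le_generate _ _ _ (Presieve.singleton_self _)
  exact (Presieve.isSheafFor_singleton_iff_bijective_s5 R _).mp
    ((Presieve.isSheafFor_iff_generate _).mpr (hR _ hcov))

lemma isIso_zeta_of_isSheaf_qTop {R : Pᵒᵖ ⥤ Type v}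
    (hR : Presieve.IsSheaf (qTop b hmono hdefl hidem) R) : IsIso (zeta b hmono hdefl R) := by
  have (V : Pᵒᵖ) : IsIso ((zeta b hmono hdefl R).app V) :=
    (isIso_iff_bijective _).mpr (bijective_map_of_isSheaf_qTop b hmono hdefl hidem hR V.unop)
  exact NatIso.isIso_of_isIso_app _

def flatStarMap {Q Q' : Pᵒᵖ ⥤ Type v} (f : Q ⟶ Q') :
    flatStar b hmono Q ⟶ flatStar b hmono Q' where
  app V := f.app (op (b V.unop))
  naturality _ _ _ := f.naturality _

lemma flatStarMap_comp {Q Q' Q'' : Pᵒᵖ ⥤ Type v} (f : Q ⟶ Q') (g : Q' ⟶ Q'') :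
    flatStarMap b hmono (f ≫ g) = flatStarMap b hmono f ≫ flatStarMap b hmono g :=
  rfl

lemma zeta_comp_flatStarMap {Q Q' : Pᵒᵖ ⥤ Type v} (f : Q ⟶ Q') :
    zeta b hmono hdefl Q ≫ flatStarMap b hmono f = f ≫ zeta b hmono hdefl Q' := by
  ext V : 2
  exact f.naturality _

lemma flatStarMap_zeta (Q : Pᵒᵖ ⥤ Type v) :
    flatStarMap b hmono (zeta b hmono hdefl Q) = zeta b hmono hdefl (flatStar b hmono Q) :=
  rfl

end FlatStar

/-- `ζ_Q : Q ⟶ ♭*Q` exhibits `♭*Q` as the `J`-sheafification of `Q`: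
every map from `Q` to a `J`-sheaf `R` factors uniquely through `ζ_Q`. -/
theorem flatStar_is_sheafification
    {P : Type u} [Preorder P] (b : P → P)
    (hmono : ∀ ⦃V' V : P⦄, V' ≤ V → b V' ≤ b V)
    (hdefl : ∀ V : P, b V ≤ V)
    (hidem : ∀ V : P, b (b V) = b V)
    (Q : Pᵒᵖ ⥤ Type v) :
    ∀ R : Pᵒᵖ ⥤ Type v, Presieve.IsSheaf (qTop b hmono hdefl hidem) R →
      ∀ f : Q ⟶ R, ∃! g : flatStar b hmono Q ⟶ R, zeta b hmono hdefl Q ≫ g = f := by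
  intro R hR f
  have := isIso_zeta_of_isSheaf_qTop b hmono hdefl hidem hR
  refine ⟨flatStarMap b hmono f ≫ inv (zeta b hmono hdefl R), ?_, fun g hg ↦ ?_⟩
  · dsimp only
    rw [← Category.assoc, zeta_comp_flatStarMap, Category.assoc, IsIso.hom_inv_id,
      Category.comp_id]
  · rw [IsIso.eq_comp_inv, ← hg, flatStarMap_comp, flatStarMap_zeta, zeta_comp_flatStarMap]
end

section
/- Let ♭ be an interior operator on a preorder P, J the quantization-induced Grothendieck topology, Q : P^op → Type a presheaf, and A a subpresheaf of ♭*Q. Then the J-closure of A in ♭*Q is given at each V ∈ P by A(♭V) (a subset of (♭*Q)(V) = Q(♭V), using ♭(♭V) = ♭V). Consequently, A is J-closed in ♭*Q if and only if A(V) = A(♭V) for every V ∈ P. -/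
open CategoryTheory Opposite

universe u v

theorem CategoryTheory.Subfunctor.sheafify_eq_self_iff {C : Type*} [Category C]
    (J : GrothendieckTopology C) {F : Cᵒᵖ ⥤ Type*} (A : Subfunctor F) :
    A.sheafify J = A ↔ A.sheafify J ≤ A :=
  ⟨le_of_eq, fun h => h.antisymm (A.le_sheafify J)⟩

section qTop

variable {P : Type u} [Preorder P] {b : P → P}
    (hmono : ∀ ⦃V' V : P⦄, V' ≤ V → b V' ≤ b V) (hdefl : ∀ V : P, b V ≤ V)
    (hidem : ∀ V : P, b (b V) = b V)

theorem mem_qTop_iff {V : P} (S : Sieve V) :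
    S ∈ qTop b hmono hdefl hidem V ↔ S.arrows (homOfLE (hdefl V)) :=
  Iff.rfl

theorem qTop_sheafify_obj {F : Pᵒᵖ ⥤ Type v} (A : Subfunctor F) (V : P) :
    (A.sheafify (qTop b hmono hdefl hidem)).obj (op V) =
      F.map (homOfLE (hdefl V)).op ⁻¹' A.obj (op (b V)) :=
  Set.ext fun s => mem_qTop_iff hmono hdefl hidem (A.sieveOfSection s)

end qTop

/-- for a subpresheaf `A` of `♭*Q`, the `J`-closure of `A` at `V` is `A(♭V)`
(viewed inside `(♭*Q)(V) = Q(♭V)` via the restriction map of `♭*Q` along `♭V ≤ V`, which is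
the canonical identification coming from `♭(♭V) = ♭V`); consequently `A` is `J`-closed in
`♭*Q` iff `A(V) = A(♭V)` for every `V`. -/
theorem closure_in_flatStar
    {P : Type u} [Preorder P] (b : P → P)
    (hmono : ∀ ⦃V' V : P⦄, V' ≤ V → b V' ≤ b V)
    (hdefl : ∀ V : P, b V ≤ V)
    (hidem : ∀ V : P, b (b V) = b V)
    (Q : Pᵒᵖ ⥤ Type v) (A : Subfunctor (flatStar b hmono Q)) :
    (∀ V : P, (A.sheafify (qTop b hmono hdefl hidem)).obj (op V) =
      ((flatStar b hmono Q).map (homOfLE (hdefl V)).op) ⁻¹' (A.obj (op (b V)))) ∧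
    (A.sheafify (qTop b hmono hdefl hidem) = A ↔
      ∀ V : P, A.obj (op V) =
        ((flatStar b hmono Q).map (homOfLE (hdefl V)).op) ⁻¹' (A.obj (op (b V)))) := by
  have hclosure := qTop_sheafify_obj hmono hdefl hidem A
  refine ⟨hclosure, ?_⟩
  simp_rw [← hclosure]
  constructor
  · intro h V
    rw [h]
  · intro h
    rw [Subfunctor.sheafify_eq_self_iff]
    exact fun U => (h U.unop).ge
end

section
/- Let ♭ be an interior operator on a preorder P and let D_j be a J-closed lower set of P. Then the set γ^∧(D_j) := { V ∈ P | there exists W ∈ D_j with V ≤ ♭W } is a lower set, it is a translation of D_j, and it is the minimum translation: every lower set D that is a translation of D_j satisfies γ^∧(D_j) ⊆ D. -/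
/-! `γ^∧(D_j)` is the lower closure of `♭(D_j)`, so it is a lower set and minimality is the
universal property of lower closure. It is a translation because `♭V ≤ ♭W ≤ W ∈ D_j` gives
`♭V ∈ D_j`, hence `V ∈ D_j` by `J`-closedness. -/

universe u

open Set

section

variable {P : Type*} [Preorder P]

theorem setOf_exists_le_apply_eq_lowerClosure_image (b : P → P) (D : Set P) :
    {V : P | ∃ W ∈ D, V ≤ b W} = lowerClosure (b '' D) := by
  ext V
  simp only [mem_ofPred_eq, SetLike.mem_coe, mem_lowerClosure, exists_mem_image]

theorem apply_mem_lowerClosure_image_iff {b : P → P} (hdefl : ∀ V : P, b V ≤ V) {D : Set P}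
    (hD : IsLowerSet D) (hclosed : ∀ V : P, b V ∈ D → V ∈ D) (V : P) :
    b V ∈ lowerClosure (b '' D) ↔ V ∈ D := by
  refine ⟨?_, fun hV ↦ subset_lowerClosure (mem_image_of_mem b hV)⟩
  rintro ⟨_, ⟨W, hW, rfl⟩, hle⟩
  exact hclosed V (hD (hle.trans (hdefl W)) hW)

end

theorem min_translation_general
    {P : Type u} [Preorder P] (b : P → P)
    (hdefl : ∀ V : P, b V ≤ V)
    (Dj : Set P) (hDj : IsLowerSet Dj) (hclosed : ∀ V : P, b V ∈ Dj → V ∈ Dj) :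
    IsLowerSet {V : P | ∃ W ∈ Dj, V ≤ b W} ∧
    (∀ V : P, V ∈ Dj ↔ b V ∈ {V : P | ∃ W ∈ Dj, V ≤ b W}) ∧
    (∀ D : Set P, IsLowerSet D → (∀ V : P, V ∈ Dj ↔ b V ∈ D) →
      {V : P | ∃ W ∈ Dj, V ≤ b W} ⊆ D) := by
  rw [setOf_exists_le_apply_eq_lowerClosure_image]
  refine ⟨(lowerClosure _).lower,
    fun V ↦ (apply_mem_lowerClosure_image_iff hdefl hDj hclosed V).symm,
    fun D hD htr ↦ lowerClosure_min ?_ hD⟩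
  exact image_subset_iff.2 fun W hW ↦ (htr W).1 hW

/-- for a `J`-closed lower set `D_j`, the set
`γ^∧(D_j) := {V | ∃ W ∈ D_j, V ≤ ♭W}` is a lower set, a translation of `D_j`, and the
minimum translation. -/
theorem min_translation
    {P : Type u} [Preorder P] (b : P → P)
    (hmono : ∀ ⦃V' V : P⦄, V' ≤ V → b V' ≤ b V)
    (hdefl : ∀ V : P, b V ≤ V)
    (hidem : ∀ V : P, b (b V) = b V)
    (Dj : Set P) (hDj : IsLowerSet Dj) (hclosed : ∀ V : P, b V ∈ Dj → V ∈ Dj) :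
    IsLowerSet {V : P | ∃ W ∈ Dj, V ≤ b W} ∧
    (∀ V : P, V ∈ Dj ↔ b V ∈ {V : P | ∃ W ∈ Dj, V ≤ b W}) ∧
    (∀ D : Set P, IsLowerSet D → (∀ V : P, V ∈ Dj ↔ b V ∈ D) →
      {V : P | ∃ W ∈ Dj, V ≤ b W} ⊆ D) :=
  min_translation_general b hdefl Dj hDj hclosed
end

section
/- Let ♭ be an interior operator on a preorder P. For every J-closed lower set D_j of P, the set of all translations of D_j is exactly the interval { D lower set of P | γ^∧(D_j) ⊆ D ⊆ D_j }, where γ^∧(D_j) := { V ∈ P | there exists W ∈ D_j with V ≤ ♭W }. Moreover, these sets of translations, indexed by the J-closed lower sets D_j, are pairwise disjoint and their union is the collection of all lower sets of P (i.e., every lower set of P is a translation of exactly one J-closed lower set). -/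
/-!
A lower set `D` is a translation of `Dj` exactly when `Dj = b ⁻¹' D`. Since `D` is a lower set,
`γ^∧(Dj) ⊆ D` says `Dj ⊆ b ⁻¹' D`; and because `b` is deflationary and `Dj` is `J`-closed, the
reverse inclusion `b ⁻¹' D ⊆ Dj` is equivalent to `D ⊆ Dj`. Conversely, for any lower set `D`
the preimage `b ⁻¹' D` is a lower set (monotonicity) and `J`-closed (idempotence), so it is the
unique `J`-closed lower set of which `D` is a translation.
-/

universe u

theorem preimage_preimage_subset_of_idempotent {α : Type*} {f : α → α}
    (hf : ∀ x, f (f x) = f x) (s : Set α) : f ⁻¹' (f ⁻¹' s) ⊆ f ⁻¹' s :=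
  fun x hx => by rwa [Set.mem_preimage, Set.mem_preimage, hf] at hx

section InteriorOperator

variable {P : Type u} [Preorder P] {b : P → P}

theorem setOf_exists_le_apply_subset_iff {Dj D : Set P} (hD : IsLowerSet D) :
    {V : P | ∃ W ∈ Dj, V ≤ b W} ⊆ D ↔ Dj ⊆ b ⁻¹' D :=
  ⟨fun h W hW => h ⟨W, hW, le_rfl⟩, fun h _ ⟨_, hW, hle⟩ => hD hle (h hW)⟩

theorem subset_preimage_of_deflationary (hdefl : ∀ V : P, b V ≤ V) {D : Set P}
    (hD : IsLowerSet D) : D ⊆ b ⁻¹' D :=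
  fun V hV => hD (hdefl V) hV

theorem eq_preimage_iff_subset_preimage_and_subset (hdefl : ∀ V : P, b V ≤ V) {Dj D : Set P}
    (hDj : b ⁻¹' Dj ⊆ Dj) (hD : IsLowerSet D) :
    Dj = b ⁻¹' D ↔ Dj ⊆ b ⁻¹' D ∧ D ⊆ Dj := by
  constructor
  · rintro rfl
    exact ⟨subset_rfl, subset_preimage_of_deflationary hdefl hD⟩
  · rintro ⟨hDj_sub, hD_sub⟩
    exact hDj_sub.antisymm fun V hV => hDj (hD_sub hV)

end InteriorOperator

/-- coarse-graining of truth-values: for every `J`-closed lower set `D_j`,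
its translations are exactly the lower sets in the interval `[γ^∧(D_j), D_j]`; moreover
every lower set of `P` is a translation of exactly one `J`-closed lower set, so the lower
sets of `P` are partitioned into these intervals. -/
theorem coarse_graining_of_truth_values
    {P : Type u} [Preorder P] (b : P → P)
    (hmono : ∀ ⦃V' V : P⦄, V' ≤ V → b V' ≤ b V)
    (hdefl : ∀ V : P, b V ≤ V)
    (hidem : ∀ V : P, b (b V) = b V) :
    (∀ Dj : Set P, IsLowerSet Dj → (∀ V : P, b V ∈ Dj → V ∈ Dj) →
      ∀ D : Set P, IsLowerSet D →
        ((∀ V : P, V ∈ Dj ↔ b V ∈ D) ↔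
          ({V : P | ∃ W ∈ Dj, V ≤ b W} ⊆ D ∧ D ⊆ Dj))) ∧
    (∀ D : Set P, IsLowerSet D →
      ∃! Dj : Set P, IsLowerSet Dj ∧ (∀ V : P, b V ∈ Dj → V ∈ Dj) ∧
        (∀ V : P, V ∈ Dj ↔ b V ∈ D)) := by
  refine ⟨fun Dj _ hDj D hD => ?_, fun D hD => ?_⟩
  · rw [setOf_exists_le_apply_subset_iff hD]
    exact Set.ext_iff.symm.trans (eq_preimage_iff_subset_preimage_and_subset hdefl hDj hD)
  · refine ⟨b ⁻¹' D, ⟨hD.preimage hmono, preimage_preimage_subset_of_idempotent hidem D,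
      fun _ => Iff.rfl⟩, fun Dj ⟨_, _, htr⟩ => Set.ext htr⟩
end

section
/- Let (P, ♭, L, O) be an outer-presheaf structure. For every x ∈ L, the family δ_j(x) defined by δ_j(x)_V := δ(x)_{♭V} is a global element of the outer sheaf ♭*O; that is, δ_j(x)_V ∈ O(♭V) for all V, δ_j(x)_{♭V} = δ_j(x)_V for all V, and for all V' ≤ V one has δ(δ_j(x)_V)_{♭V'} = δ_j(x)_{V'}. In particular δ_j(x) is a hyper-element of ♭*O. -/
universe u v

/-- The daseinization of `x ∈ L` at `V ∈ P`: the infimum of the elements of `O V` above `x`. -/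
def dasein {P : Type u} {L : Type v} [CompleteLattice L]
    (O : P → Set L) (x : L) (V : P) : L :=
  sInf {y | y ∈ O V ∧ x ≤ y}

section Dasein

variable {P : Type u} {L : Type v} [CompleteLattice L] {O : P → Set L} {x y : L} {V V' : P}

theorem le_dasein : x ≤ dasein O x V :=
  le_sInf fun _ hy => hy.2

theorem dasein_le_of_mem (hy : y ∈ O V) (hxy : x ≤ y) : dasein O x V ≤ y :=
  sInf_le ⟨hy, hxy⟩

theorem dasein_mem (hInf : ∀ T ⊆ O V, sInf T ∈ O V) : dasein O x V ∈ O V :=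
  hInf _ fun _ hy => hy.1

theorem dasein_mono (hxy : x ≤ y) : dasein O x V ≤ dasein O y V :=
  le_sInf fun _ hz => dasein_le_of_mem hz.1 (hxy.trans hz.2)

theorem dasein_dasein_of_subset (hO : O V' ⊆ O V) :
    dasein O (dasein O x V) V' = dasein O x V' :=
  le_antisymm
    (le_sInf fun _ hy => dasein_le_of_mem hy.1 (dasein_le_of_mem (hO hy.1) hy.2))
    (dasein_mono le_dasein)

end Dasein

theorem daseinization_j_is_global_element_general
    {P : Type u} [Preorder P] (b : P → P)
    (hmono : ∀ ⦃V' V : P⦄, V' ≤ V → b V' ≤ b V)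
    (hidem : ∀ V : P, b (b V) = b V)
    {L : Type v} [CompleteLattice L] (O : P → Set L)
    (hOmono : ∀ ⦃V' V : P⦄, V' ≤ V → O V' ⊆ O V)
    (hInf : ∀ (V : P) (T : Set L), T ⊆ O V → sInf T ∈ O V)
    (x : L) :
    (∀ V : P, dasein O x (b V) ∈ O (b V)) ∧
    (∀ V : P, dasein O x (b (b V)) = dasein O x (b V)) ∧
    (∀ ⦃V' V : P⦄, V' ≤ V → dasein O (dasein O x (b V)) (b V') = dasein O x (b V')) ∧
    (∀ ⦃V' V : P⦄, V' ≤ V → dasein O (dasein O x (b V)) (b V') ≤ dasein O x (b V')) := by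
  have restrict : ∀ ⦃V' V : P⦄, V' ≤ V →
      dasein O (dasein O x (b V)) (b V') = dasein O x (b V') :=
    fun _ _ h => dasein_dasein_of_subset (hOmono (hmono h))
  exact ⟨fun V => dasein_mem (hInf (b V)), fun V => by rw [hidem], restrict,
    fun _ _ h => (restrict h).le⟩

/-- for every `x ∈ L`, the family `δ_j(x)` with `δ_j(x)_V := δ(x)_{♭V}` is a
global element of the outer sheaf `♭*O`; in particular it is a hyper-element of `♭*O`. -/
theorem daseinization_j_is_global_element
    {P : Type u} [Preorder P] (b : P → P)
    (hmono : ∀ ⦃V' V : P⦄, V' ≤ V → b V' ≤ b V)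
    (hdefl : ∀ V : P, b V ≤ V)
    (hidem : ∀ V : P, b (b V) = b V)
    {L : Type v} [CompleteLattice L] (O : P → Set L)
    (hOmono : ∀ ⦃V' V : P⦄, V' ≤ V → O V' ⊆ O V)
    (hInf : ∀ (V : P) (T : Set L), T ⊆ O V → sInf T ∈ O V)
    (hSup : ∀ (V : P) (T : Set L), T ⊆ O V → sSup T ∈ O V)
    (x : L) :
    (∀ V : P, dasein O x (b V) ∈ O (b V)) ∧
    (∀ V : P, dasein O x (b (b V)) = dasein O x (b V)) ∧
    (∀ ⦃V' V : P⦄, V' ≤ V → dasein O (dasein O x (b V)) (b V') = dasein O x (b V')) ∧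
    (∀ ⦃V' V : P⦄, V' ≤ V → dasein O (dasein O x (b V)) (b V') ≤ dasein O x (b V')) :=
  daseinization_j_is_global_element_general b hmono hidem O hOmono hInf x
end

section
/- Let (P, ♭, L, O) be an outer-presheaf structure, let μ : L → ℝ be a monotone function (modelling P ↦ tr(ρP) for a density matrix ρ), and let r ∈ ℝ. Fix V ∈ P and let h be a family assigning to each W ≤ ♭V an element h_W ∈ O(W) such that δ(h_W)_{W'} ≤ h_{W'} whenever W' ≤ W ≤ ♭V. Then the following are equivalent: (a) μ(h_W) ≥ r for every W ≤ ♭V; (b) μ(h_{♭W}) ≥ r for every W ≤ V. (This is the statement that the truth presheaf T^{ρ,r} and the truth sheaf T^{ρ,r}_j are each other's translations.) -/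
/-! Every family compatible with daseinization is antitone below `♭V`, since
`h_{♭V} ≤ δ(h_{♭V})_W ≤ h_W`; so `μ ∘ h` is smallest at `♭V = ♭(♭V)`, which (b) reaches. -/

universe u v

theorem le_dasein_s18 {P : Type u} {L : Type v} [CompleteLattice L]
    (O : P → Set L) (x : L) (V : P) : x ≤ dasein O x V :=
  le_sInf fun _ hy => hy.2

theorem truth_object_translation_general
    {P : Type u} [Preorder P] (b : P → P)
    (hmono : ∀ ⦃V' V : P⦄, V' ≤ V → b V' ≤ b V)
    (hdefl : ∀ V : P, b V ≤ V)
    (hidem : ∀ V : P, b (b V) = b V)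
    {L : Type v} [CompleteLattice L] (O : P → Set L)
    (mu : L → ℝ) (hmu : Monotone mu) (r : ℝ)
    (V : P) (h : P → L)
    (hres : ∀ ⦃W' W : P⦄, W' ≤ W → W ≤ b V → dasein O (h W) W' ≤ h W') :
    (∀ W : P, W ≤ b V → r ≤ mu (h W)) ↔ (∀ W : P, W ≤ V → r ≤ mu (h (b W))) := by
  refine ⟨fun ha W hW => ha (b W) (hmono hW), fun hb W hW => ?_⟩
  have h_flat : r ≤ mu (h (b V)) := hidem V ▸ hb (b V) (hdefl V)
  exact h_flat.trans (hmu ((le_dasein_s18 O _ W).trans (hres hW le_rfl)))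

/-- the truth presheaf `T^{ρ,r}` and the truth sheaf `T^{ρ,r}_j` are each
other's translations: for a family `h` over the subalgebras of `♭V` compatible with
daseinization, `μ(h_W) ≥ r` for all `W ≤ ♭V` iff `μ(h_{♭W}) ≥ r` for all `W ≤ V`. -/
theorem truth_object_translation
    {P : Type u} [Preorder P] (b : P → P)
    (hmono : ∀ ⦃V' V : P⦄, V' ≤ V → b V' ≤ b V)
    (hdefl : ∀ V : P, b V ≤ V)
    (hidem : ∀ V : P, b (b V) = b V)
    {L : Type v} [CompleteLattice L] (O : P → Set L)
    (hOmono : ∀ ⦃V' V : P⦄, V' ≤ V → O V' ⊆ O V)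
    (hInf : ∀ (V : P) (T : Set L), T ⊆ O V → sInf T ∈ O V)
    (hSup : ∀ (V : P) (T : Set L), T ⊆ O V → sSup T ∈ O V)
    (mu : L → ℝ) (hmu : Monotone mu) (r : ℝ)
    (V : P) (h : P → L)
    (hmem : ∀ W : P, W ≤ b V → h W ∈ O W)
    (hres : ∀ ⦃W' W : P⦄, W' ≤ W → W ≤ b V → dasein O (h W) W' ≤ h W') :
    (∀ W : P, W ≤ b V → r ≤ mu (h W)) ↔ (∀ W : P, W ≤ V → r ≤ mu (h (b W))) :=
  truth_object_translation_general b hmono hdefl hidem O mu hmu r V h hres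
end

section
/- Let (P, ♭, L, O) be an outer-presheaf structure, let μ : L → ℝ be a monotone function (modelling P ↦ tr(ρP) for a density matrix ρ), and let r ∈ ℝ. Let k be a hyper-element of ♭*O and V ∈ P. If μ(k_W) ≥ r for every W ≤ ♭V, then μ(k_W) ≥ r for every W ≤ V. (This is the sheaf-condition content of the proposition that the truth object T^{ρ,r}_j is a J-sheaf.) -/
universe u v

theorem truth_sheaf_condition_general
    {P : Type u} [Preorder P] (b : P → P)
    (hmono : ∀ ⦃V' V : P⦄, V' ≤ V → b V' ≤ b V)
    {L : Type v}
    (k : P → L)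
    (hk2 : ∀ V : P, k (b V) = k V)
    (mu : L → ℝ) (r : ℝ) (V : P)
    (hyp : ∀ W : P, W ≤ b V → r ≤ mu (k W)) :
    ∀ W : P, W ≤ V → r ≤ mu (k W) := by
  intro W hWV
  rw [← hk2 W]
  exact hyp (b W) (hmono hWV)

/-- sheaf condition for the truth object `T^{ρ,r}_j`: for a hyper-element `k`
of `♭*O`, if `μ(k_W) ≥ r` for every `W ≤ ♭V` then `μ(k_W) ≥ r` for every `W ≤ V`. -/
theorem truth_sheaf_condition
    {P : Type u} [Preorder P] (b : P → P)
    (hmono : ∀ ⦃V' V : P⦄, V' ≤ V → b V' ≤ b V)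
    (hdefl : ∀ V : P, b V ≤ V)
    (hidem : ∀ V : P, b (b V) = b V)
    {L : Type v} [CompleteLattice L] (O : P → Set L)
    (hOmono : ∀ ⦃V' V : P⦄, V' ≤ V → O V' ⊆ O V)
    (hInf : ∀ (V : P) (T : Set L), T ⊆ O V → sInf T ∈ O V)
    (hSup : ∀ (V : P) (T : Set L), T ⊆ O V → sSup T ∈ O V)
    (k : P → L)
    (hk1 : ∀ V : P, k V ∈ O (b V))
    (hk2 : ∀ V : P, k (b V) = k V)
    (hk3 : ∀ ⦃V' V : P⦄, V' ≤ V → dasein O (k V) (b V') ≤ k V')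
    (mu : L → ℝ) (hmu : Monotone mu) (r : ℝ) (V : P)
    (hyp : ∀ W : P, W ≤ b V → r ≤ mu (k W)) :
    ∀ W : P, W ≤ V → r ≤ mu (k W) :=
  truth_sheaf_condition_general b hmono k hk2 mu r V hyp
end
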